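/- arXiv:2107.07262 — 4 statements merged into one kernel-verified Lean document; each statement's English description precedes it below -/
import Mathlib

section
/- Let D be a positive squarefree integer and R_D the ring of integers of Q(i√D). There are only finitely many triples (μ₁, μ₂, μ₃) of elements of R_D \ {0, 1} satisfying 1/μ₁ + 1/μ₂ + 1/μ₃ = 1. -/
/-!
Every nonzero element of `R_D` has norm at least `1`, since its squared norm is a positive
integer. Order a solution so that `‖μ₁‖ ≤ ‖μ₂‖ ≤ ‖μ₃‖` and clear denominators:
`μ₂μ₃ + μ₁μ₃ + μ₁μ₂ = μ₁μ₂μ₃` gives `‖μ₁‖ ≤ 3`; rewritten as `(μ₁ - 1)μ₂μ₃ = μ₁(μ₂ + μ₃)` with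
`μ₁ - 1 ≠ 0` it gives `‖μ₂‖ ≤ 6`; rewritten as `μ₃(μ₁μ₂ - μ₁ - μ₂) = μ₁μ₂` it gives `‖μ₃‖ ≤ 18`.
A subring whose nonzero elements have norm `≥ 1` is closed and discrete, so it has only finitely
many elements of norm `≤ 18`.
-/

open Polynomial

/-- The generator of the ring of integers of `ℚ(i√D)`. -/
noncomputable def alphaD (D : ℕ) : ℂ :=
  if D % 4 = 3 then (1 + Complex.I * Real.sqrt D) / 2 else Complex.I * Real.sqrt D

/-- The ring of integers `R_D = ℤ[α_D]` of `ℚ(i√D)`, viewed as a subset of `ℂ`. -/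
noncomputable def RD (D : ℕ) : Set ℂ :=
  {z | ∃ x y : ℤ, z = (x : ℂ) + (y : ℂ) * alphaD D}

open Complex

theorem Complex.sq_eq_two_mul_re_mul_sub_normSq (z : ℂ) : z ^ 2 = 2 * z.re * z - normSq z := by
  have h := congrArg (z * ·) (add_conj z)
  simp only [mul_add, mul_conj] at h
  push_cast at h
  linear_combination h

theorem Complex.normSq_intCast_add_intCast_mul (x y : ℤ) (α : ℂ) :
    normSq (x + y * α) = x ^ 2 + 2 * α.re * x * y + normSq α * y ^ 2 := by
  simp [normSq_apply]; ring

section UnitFractions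

variable {𝕜 : Type*} [NormedField 𝕜] {R : Subring 𝕜}

theorem norm_le_of_inv_add_inv_add_inv_eq_one_of_norm_le_of_norm_le
    (hR : ∀ z ∈ R, z ≠ 0 → 1 ≤ ‖z‖) {a b c : 𝕜} (ha : a ∈ R) (hb : b ∈ R)
    (ha0 : a ≠ 0) (ha1 : a ≠ 1) (hb0 : b ≠ 0) (hc0 : c ≠ 0)
    (habc : 1 / a + 1 / b + 1 / c = 1) (hab : ‖a‖ ≤ ‖b‖) (hbc : ‖b‖ ≤ ‖c‖) :
    ‖c‖ ≤ 18 := by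
  have hsum : b * c + a * c + a * b = a * b * c := by
    field_simp at habc; linear_combination habc
  have hc_pos : 0 < ‖c‖ := norm_pos_iff.2 hc0
  have ha3 : ‖a‖ ≤ 3 := by
    have : ‖a‖ * (‖b‖ * ‖c‖) ≤ 3 * (‖b‖ * ‖c‖) :=
      calc ‖a‖ * (‖b‖ * ‖c‖) = ‖b * c + a * c + a * b‖ := by simp [hsum, mul_assoc]
        _ ≤ ‖b‖ * ‖c‖ + ‖a‖ * ‖c‖ + ‖a‖ * ‖b‖ := by
          simpa using norm_add₃_le (a := b * c) (b := a * c) (c := a * b)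
        _ ≤ 3 * (‖b‖ * ‖c‖) := by
          nlinarith [mul_le_mul_of_nonneg_right hab hc_pos.le,
            mul_le_mul_of_nonneg_left hbc (norm_nonneg a)]
    exact le_of_mul_le_mul_right this (by positivity)
  have hb6 : ‖b‖ ≤ 6 := by
    have ha_sub : 1 ≤ ‖a - 1‖ := hR _ (R.sub_mem ha R.one_mem) (sub_ne_zero.2 ha1)
    have : ‖b‖ * ‖c‖ ≤ 6 * ‖c‖ :=
      calc ‖b‖ * ‖c‖ ≤ ‖a - 1‖ * (‖b‖ * ‖c‖) := le_mul_of_one_le_left (by positivity) ha_sub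
        _ = ‖a‖ * ‖b + c‖ := by
          rw [← norm_mul, ← norm_mul, ← norm_mul]; congr 1; linear_combination -hsum
        _ ≤ 3 * (‖c‖ + ‖c‖) := by gcongr; exact (norm_add_le b c).trans (by linarith)
        _ = 6 * ‖c‖ := by ring
    exact le_of_mul_le_mul_right this hc_pos
  have hdenom : a * b - a - b ≠ 0 := by
    intro h
    have : a * b = 0 := by linear_combination hsum + c * h
    exact mul_ne_zero ha0 hb0 this
  have hdenom1 : 1 ≤ ‖a * b - a - b‖ :=
    hR _ (R.sub_mem (R.sub_mem (R.mul_mem ha hb) ha) hb) hdenom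
  calc ‖c‖ ≤ ‖c‖ * ‖a * b - a - b‖ := le_mul_of_one_le_right hc_pos.le hdenom1
    _ = ‖a‖ * ‖b‖ := by rw [← norm_mul, ← norm_mul]; congr 1; linear_combination -hsum
    _ ≤ 3 * 6 := by gcongr
    _ = 18 := by norm_num

theorem norm_le_of_inv_add_inv_add_inv_eq_one (hR : ∀ z ∈ R, z ≠ 0 → 1 ≤ ‖z‖) {a b c : 𝕜}
    (ha : a ∈ R) (hb : b ∈ R) (hc : c ∈ R) (ha0 : a ≠ 0) (ha1 : a ≠ 1) (hb0 : b ≠ 0)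
    (hb1 : b ≠ 1) (hc0 : c ≠ 0) (hc1 : c ≠ 1) (habc : 1 / a + 1 / b + 1 / c = 1) :
    ‖a‖ ≤ 18 ∧ ‖b‖ ≤ 18 ∧ ‖c‖ ≤ 18 := by
  wlog hab : ‖a‖ ≤ ‖b‖ generalizing a b c
  · obtain ⟨hb', ha', hc'⟩ :=
      this hb ha hc hb0 hb1 ha0 ha1 hc0 hc1 (by linear_combination habc) (le_of_not_ge hab)
    exact ⟨ha', hb', hc'⟩
  wlog hbc : ‖b‖ ≤ ‖c‖ generalizing a b c
  · rcases le_total ‖a‖ ‖c‖ with hac | hca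
    · obtain ⟨ha', hc', hb'⟩ :=
        this ha hc hb ha0 ha1 hc0 hc1 hb0 hb1 (by linear_combination habc) hac (le_of_not_ge hbc)
      exact ⟨ha', hb', hc'⟩
    · obtain ⟨hc', ha', hb'⟩ :=
        this hc ha hb hc0 hc1 ha0 ha1 hb0 hb1 (by linear_combination habc) hca hab
      exact ⟨ha', hb', hc'⟩
  have hc18 := norm_le_of_inv_add_inv_add_inv_eq_one_of_norm_le_of_norm_le hR ha hb ha0 ha1 hb0
    hc0 habc hab hbc
  exact ⟨by linarith, by linarith, hc18⟩

theorem finite_setOf_inv_add_inv_add_inv_eq_one [ProperSpace 𝕜]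
    (hR : ∀ z ∈ R, z ≠ 0 → 1 ≤ ‖z‖) :
    Set.Finite {t : 𝕜 × 𝕜 × 𝕜 |
      t.1 ∈ R ∧ t.2.1 ∈ R ∧ t.2.2 ∈ R ∧
      t.1 ≠ 0 ∧ t.1 ≠ 1 ∧ t.2.1 ≠ 0 ∧ t.2.1 ≠ 1 ∧ t.2.2 ≠ 0 ∧ t.2.2 ≠ 1 ∧
      1 / t.1 + 1 / t.2.1 + 1 / t.2.2 = 1} := by
  have hsep : (R : Set 𝕜).Pairwise fun x y => 1 ≤ dist x y := fun x hx y hy hxy =>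
    by simpa only [dist_eq_norm] using hR _ (R.sub_mem hx hy) (sub_ne_zero.2 hxy)
  have hS : (Metric.closedBall (0 : 𝕜) 18 ∩ R).Finite :=
    Metric.finite_isBounded_inter_isClosed
      (isDiscrete_iff_discreteTopology.2 <| .of_forall_le_dist one_pos fun x y hxy =>
        hsep x.2 y.2 (Subtype.coe_ne_coe.2 hxy))
      Metric.isBounded_closedBall (Metric.isClosed_of_pairwise_le_dist one_pos hsep)
  refine (hS.prod (hS.prod hS)).subset ?_
  rintro ⟨a, b, c⟩ ⟨ha, hb, hc, ha0, ha1, hb0, hb1, hc0, hc1, habc⟩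
  obtain ⟨ha', hb', hc'⟩ :=
    norm_le_of_inv_add_inv_add_inv_eq_one hR ha hb hc ha0 ha1 hb0 hb1 hc0 hc1 habc
  simp only [Set.mem_prod, Set.mem_inter_iff, mem_closedBall_zero_iff, SetLike.mem_coe]
  exact ⟨⟨ha', ha⟩, ⟨hb', hb⟩, hc', hc⟩

end UnitFractions

theorem exists_two_mul_alphaD_re_eq_and_normSq_eq (D : ℕ) :
    ∃ t n : ℤ, 2 * (alphaD D).re = t ∧ normSq (alphaD D) = n := by
  unfold alphaD
  split_ifs with h
  · obtain ⟨k, rfl⟩ : ∃ k, D = 4 * k + 3 := ⟨D / 4, by omega⟩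
    refine ⟨1, k + 1, by simp, ?_⟩
    have hs : Real.sqrt (4 * k + 3) ^ 2 = 4 * k + 3 := Real.sq_sqrt (by positivity)
    simp [normSq_apply]
    linear_combination hs / 4
  · exact ⟨0, D, by simp, by simp [normSq_apply, ← sq]⟩

namespace RD

def subring (D : ℕ) : Subring ℂ where
  carrier := RD D
  zero_mem' := ⟨0, 0, by simp⟩
  one_mem' := ⟨1, 0, by simp⟩
  add_mem' := by
    rintro _ _ ⟨x₁, y₁, rfl⟩ ⟨x₂, y₂, rfl⟩
    exact ⟨x₁ + x₂, y₁ + y₂, by push_cast; ring⟩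
  neg_mem' := by
    rintro _ ⟨x, y, rfl⟩
    exact ⟨-x, -y, by push_cast; ring⟩
  mul_mem' := by
    rintro _ _ ⟨x₁, y₁, rfl⟩ ⟨x₂, y₂, rfl⟩
    obtain ⟨t, n, ht, hn⟩ := exists_two_mul_alphaD_re_eq_and_normSq_eq D
    have hsq : alphaD D ^ 2 = t * alphaD D - n := by
      rw [sq_eq_two_mul_re_mul_sub_normSq, hn, ← ofReal_intCast, ← ht]; push_cast; ring
    refine ⟨x₁ * x₂ - n * y₁ * y₂, x₁ * y₂ + x₂ * y₁ + t * y₁ * y₂, ?_⟩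
    push_cast
    linear_combination y₁ * y₂ * hsq

theorem one_le_norm {D : ℕ} {z : ℂ} (hz : z ∈ RD D) (hz0 : z ≠ 0) : 1 ≤ ‖z‖ := by
  obtain ⟨x, y, rfl⟩ := hz
  obtain ⟨t, n, ht, hn⟩ := exists_two_mul_alphaD_re_eq_and_normSq_eq D
  have hnormSq : normSq (x + y * alphaD D) = (x ^ 2 + t * x * y + n * y ^ 2 : ℤ) := by
    rw [normSq_intCast_add_intCast_mul, ht, hn]; push_cast; ring
  have hpos : (0 : ℤ) < x ^ 2 + t * x * y + n * y ^ 2 := by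
    exact_mod_cast hnormSq ▸ normSq_pos.2 hz0
  have hsq : 1 ≤ ‖(x : ℂ) + y * alphaD D‖ ^ 2 := by
    rw [← normSq_eq_norm_sq, hnormSq]; exact_mod_cast hpos
  nlinarith [norm_nonneg ((x : ℂ) + y * alphaD D)]

end RD

theorem stmt_4_general (D : ℕ) :
    Set.Finite {t : ℂ × ℂ × ℂ |
      t.1 ∈ RD D ∧ t.2.1 ∈ RD D ∧ t.2.2 ∈ RD D ∧
      t.1 ≠ 0 ∧ t.1 ≠ 1 ∧ t.2.1 ≠ 0 ∧ t.2.1 ≠ 1 ∧ t.2.2 ≠ 0 ∧ t.2.2 ≠ 1 ∧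
      1 / t.1 + 1 / t.2.1 + 1 / t.2.2 = 1} :=
  finite_setOf_inv_add_inv_add_inv_eq_one (R := RD.subring D) fun _ => RD.one_le_norm

theorem stmt_4 (D : ℕ) (hD : 0 < D) (hsf : Squarefree D) :
    Set.Finite {t : ℂ × ℂ × ℂ |
      t.1 ∈ RD D ∧ t.2.1 ∈ RD D ∧ t.2.2 ∈ RD D ∧
      t.1 ≠ 0 ∧ t.1 ≠ 1 ∧ t.2.1 ≠ 0 ∧ t.2.1 ≠ 1 ∧ t.2.2 ≠ 0 ∧ t.2.2 ≠ 1 ∧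
      1 / t.1 + 1 / t.2.1 + 1 / t.2.2 = 1} :=
  stmt_4_general D
end

section
/- Let D be a squarefree integer with D ≥ 5 and D ∉ {7, 11, 15}. Then 2, 3 and 4 are the only elements z of R_D \ {0, 1} with Re(1/z) ≥ 1/4, and consequently the only triples (μ₁, μ₂, μ₃) of elements of R_D \ {0, 1} with 1/μ₁ + 1/μ₂ + 1/μ₃ = 1 are (2, 3, 6), (2, 4, 4) and (3, 3, 3) up to permutation. -/
/-!
For `D ≥ 5` outside `{7, 11, 15}` the generator `α_D` has imaginary part `> 2`, so every element
of `R_D` other than a rational integer has `|Im z| > 2`. On the other hand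
`Re(1/z) = Re z / |z|²`, so `Re(1/z) ≥ 1/4` says exactly that `z` lies in the closed disc
`|z - 2| ≤ 2`, where `|Im z| ≤ 2`. Hence such `z` is an integer in `[1, 4]`, i.e. one of
`2, 3, 4` once `z ≠ 0, 1`.

If `1/μ₁ + 1/μ₂ + 1/μ₃ = 1`, the real parts of the `1/μᵢ` sum to `1`. Whenever one of them is
at least `1/4` it is at most `1/2`, which forces two of them to be at least `1/4`; so two of the
`μᵢ` lie in `{2, 3, 4}`, and the third is determined by them. The pair `3, 4` would force
`12/5`, which is excluded because `Re(5/12) ≥ 1/4` without `12/5` being one of `2, 3, 4`.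
-/

open Polynomial

theorem two_lt_im_alphaD {D : ℕ} (hD : 5 ≤ D) (hD7 : D ≠ 7) (hD11 : D ≠ 11) (hD15 : D ≠ 15) :
    2 < (alphaD D).im := by
  unfold alphaD
  split_ifs with h
  · have h16 : Real.sqrt 16 < Real.sqrt D :=
      Real.sqrt_lt_sqrt (by norm_num) (by exact_mod_cast (by omega : 16 < D))
    rw [show (16 : ℝ) = 4 ^ 2 by norm_num, Real.sqrt_sq (by norm_num)] at h16
    simpa using (by linarith : 2 < Real.sqrt D / 2)
  · have h4 : Real.sqrt 4 < Real.sqrt D :=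
      Real.sqrt_lt_sqrt (by norm_num) (by exact_mod_cast (by omega : 4 < D))
    rw [show (4 : ℝ) = 2 ^ 2 by norm_num, Real.sqrt_sq (by norm_num)] at h4
    simpa using h4

theorem exists_eq_intCast_of_mem_RD {D : ℕ} (hα : 2 < (alphaD D).im) {z : ℂ} (hz : z ∈ RD D)
    (him : z.im ^ 2 ≤ 4) : ∃ n : ℤ, z = n := by
  obtain ⟨x, y, rfl⟩ := hz
  suffices hy : y = 0 by exact ⟨x, by simp [hy]⟩
  by_contra hy
  have hy1 : (1 : ℝ) ≤ (y : ℝ) ^ 2 := by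
    rw [← sq_abs]
    exact_mod_cast one_le_pow₀ (Int.one_le_abs hy)
  have him' : ((x : ℂ) + y * alphaD D).im = y * (alphaD D).im := by simp
  rw [him', mul_pow] at him
  nlinarith

theorem Complex.normSq_le_four_mul_re_of_quarter_le_re_one_div {z : ℂ}
    (h : 1 / 4 ≤ (1 / z).re) : Complex.normSq z ≤ 4 * z.re := by
  rw [one_div z, Complex.inv_re] at h
  rcases (Complex.normSq_nonneg z).eq_or_lt with h0 | hpos
  · rw [← h0, div_zero] at h
    linarith
  · rw [le_div_iff₀ hpos] at h
    linarith

theorem eq_two_or_three_or_four_of_quarter_le_re_one_div {D : ℕ} (hα : 2 < (alphaD D).im)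
    {z : ℂ} (hz : z ∈ RD D) (h0 : z ≠ 0) (h1 : z ≠ 1) (h : 1 / 4 ≤ (1 / z).re) :
    z = 2 ∨ z = 3 ∨ z = 4 := by
  have hdisc := Complex.normSq_le_four_mul_re_of_quarter_le_re_one_div h
  rw [Complex.normSq_apply] at hdisc
  obtain ⟨n, rfl⟩ := exists_eq_intCast_of_mem_RD hα hz (by nlinarith [sq_nonneg (z.re - 2)])
  have hn : n * n ≤ 4 * n := by exact_mod_cast (by simpa using hdisc : (n : ℝ) * n ≤ 4 * n)
  have hn0 : n ≠ 0 := by rintro rfl; simp at h0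
  have hn1 : n ≠ 1 := by rintro rfl; simp at h1
  have hn' : n = 2 ∨ n = 3 ∨ n = 4 := by
    have : 0 ≤ n ∧ n ≤ 4 := ⟨by nlinarith, by nlinarith⟩
    omega
  rcases hn' with rfl | rfl | rfl <;> norm_num

theorem quarter_le_pair_of_add_add_eq_one {p q r : ℝ} (h : p + q + r = 1)
    (hp : 1 / 4 ≤ p → p ≤ 1 / 2) (hq : 1 / 4 ≤ q → q ≤ 1 / 2) (hr : 1 / 4 ≤ r → r ≤ 1 / 2) :
    (1 / 4 ≤ p ∧ 1 / 4 ≤ q) ∨ (1 / 4 ≤ p ∧ 1 / 4 ≤ r) ∨ (1 / 4 ≤ q ∧ 1 / 4 ≤ r) := by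
  grind

theorem multiset_eq_of_one_div_sum_eq_one_of_two_mem {a b c : ℂ}
    (ha : a = 2 ∨ a = 3 ∨ a = 4) (hb : b = 2 ∨ b = 3 ∨ b = 4) (hc₀ : c ≠ 0)
    (hc : 1 / 4 ≤ (1 / c).re → c = 2 ∨ c = 3 ∨ c = 4) (hsum : 1 / a + 1 / b + 1 / c = 1) :
    ({a, b, c} : Multiset ℂ) = {2, 3, 6} ∨ ({a, b, c} : Multiset ℂ) = {2, 4, 4} ∨
      ({a, b, c} : Multiset ℂ) = {3, 3, 3} := by
  have hc' : c = (1 - 1 / a - 1 / b)⁻¹ := by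
    rw [← inv_inv c]
    congr 1
    linear_combination hsum
  have hc₁₂₅ : c ≠ 12 / 5 := by
    rintro rfl
    norm_num [Complex.div_re] at hc
  rcases ha with rfl | rfl | rfl <;> rcases hb with rfl | rfl | rfl
  · exact absurd (by rw [hc']; norm_num) hc₀
  · obtain rfl : c = 6 := by rw [hc']; norm_num
    exact Or.inl rfl
  · obtain rfl : c = 4 := by rw [hc']; norm_num
    exact Or.inr (Or.inl rfl)
  · obtain rfl : c = 6 := by rw [hc']; norm_num
    exact Or.inl (Multiset.cons_swap _ _ _)
  · obtain rfl : c = 3 := by rw [hc']; norm_num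
    exact Or.inr (Or.inr rfl)
  · exact absurd (by rw [hc']; norm_num) hc₁₂₅
  · obtain rfl : c = 4 := by rw [hc']; norm_num
    exact Or.inr (Or.inl (Multiset.cons_swap _ _ _))
  · exact absurd (by rw [hc']; norm_num) hc₁₂₅
  · obtain rfl : c = 2 := by rw [hc']; norm_num
    right; left
    simp only [Multiset.insert_eq_cons, ← Multiset.singleton_add]
    abel

theorem multiset_eq_of_one_div_sum_eq_one_of_mem_RD {D : ℕ} (hα : 2 < (alphaD D).im)
    {μ₁ μ₂ μ₃ : ℂ} (h₁ : μ₁ ∈ RD D) (h₂ : μ₂ ∈ RD D) (h₃ : μ₃ ∈ RD D)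
    (h₁₀ : μ₁ ≠ 0) (h₁₁ : μ₁ ≠ 1) (h₂₀ : μ₂ ≠ 0) (h₂₁ : μ₂ ≠ 1) (h₃₀ : μ₃ ≠ 0) (h₃₁ : μ₃ ≠ 1)
    (hsum : 1 / μ₁ + 1 / μ₂ + 1 / μ₃ = 1) :
    ({μ₁, μ₂, μ₃} : Multiset ℂ) = {2, 3, 6} ∨ ({μ₁, μ₂, μ₃} : Multiset ℂ) = {2, 4, 4} ∨
      ({μ₁, μ₂, μ₃} : Multiset ℂ) = {3, 3, 3} := by
  have hquarter {z : ℂ} (hz : z ∈ RD D) (h0 : z ≠ 0) (h1 : z ≠ 1) :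
      1 / 4 ≤ (1 / z).re → z = 2 ∨ z = 3 ∨ z = 4 :=
    eq_two_or_three_or_four_of_quarter_le_re_one_div hα hz h0 h1
  have hhalf {z : ℂ} (hz : z ∈ RD D) (h0 : z ≠ 0) (h1 : z ≠ 1) :
      1 / 4 ≤ (1 / z).re → (1 / z).re ≤ 1 / 2 := fun h ↦ by
    rcases hquarter hz h0 h1 h with rfl | rfl | rfl <;> norm_num [Complex.div_re]
  have hre : (1 / μ₁).re + (1 / μ₂).re + (1 / μ₃).re = 1 := by
    simpa using congrArg Complex.re hsum
  rcases quarter_le_pair_of_add_add_eq_one hre (hhalf h₁ h₁₀ h₁₁) (hhalf h₂ h₂₀ h₂₁)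
    (hhalf h₃ h₃₀ h₃₁) with ⟨hq₁, hq₂⟩ | ⟨hq₁, hq₃⟩ | ⟨hq₂, hq₃⟩
  · exact multiset_eq_of_one_div_sum_eq_one_of_two_mem (hquarter h₁ h₁₀ h₁₁ hq₁)
      (hquarter h₂ h₂₀ h₂₁ hq₂) h₃₀ (hquarter h₃ h₃₀ h₃₁) hsum
  · have hperm : ({μ₁, μ₃, μ₂} : Multiset ℂ) = {μ₁, μ₂, μ₃} :=
      congrArg (μ₁ ::ₘ ·) (Multiset.pair_comm μ₃ μ₂)
    rw [← hperm]
    exact multiset_eq_of_one_div_sum_eq_one_of_two_mem (hquarter h₁ h₁₀ h₁₁ hq₁)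
      (hquarter h₃ h₃₀ h₃₁ hq₃) h₂₀ (hquarter h₂ h₂₀ h₂₁) (by linear_combination hsum)
  · have hperm : ({μ₂, μ₃, μ₁} : Multiset ℂ) = {μ₁, μ₂, μ₃} := by
      simp only [Multiset.insert_eq_cons, ← Multiset.singleton_add]
      abel
    rw [← hperm]
    exact multiset_eq_of_one_div_sum_eq_one_of_two_mem (hquarter h₂ h₂₀ h₂₁ hq₂)
      (hquarter h₃ h₃₀ h₃₁ hq₃) h₁₀ (hquarter h₁ h₁₀ h₁₁) (by linear_combination hsum)

theorem stmt_5_general (D : ℕ) (hD : 5 ≤ D)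
    (hD7 : D ≠ 7) (hD11 : D ≠ 11) (hD15 : D ≠ 15) :
    ({z : ℂ | z ∈ RD D ∧ z ≠ 0 ∧ z ≠ 1 ∧ (1 / z).re ≥ 1 / 4} = {2, 3, 4}) ∧
    ∀ μ₁ μ₂ μ₃ : ℂ, μ₁ ∈ RD D → μ₂ ∈ RD D → μ₃ ∈ RD D →
      μ₁ ≠ 0 → μ₁ ≠ 1 → μ₂ ≠ 0 → μ₂ ≠ 1 → μ₃ ≠ 0 → μ₃ ≠ 1 →
      1 / μ₁ + 1 / μ₂ + 1 / μ₃ = 1 →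
      ({μ₁, μ₂, μ₃} : Multiset ℂ) = {2, 3, 6} ∨
      ({μ₁, μ₂, μ₃} : Multiset ℂ) = {2, 4, 4} ∨
      ({μ₁, μ₂, μ₃} : Multiset ℂ) = {3, 3, 3} := by
  have hα := two_lt_im_alphaD hD hD7 hD11 hD15
  refine ⟨Set.ext fun z ↦ ⟨fun ⟨hz, h0, h1, h⟩ ↦
    eq_two_or_three_or_four_of_quarter_le_re_one_div hα hz h0 h1 h, ?_⟩,
    fun _ _ _ ↦ multiset_eq_of_one_div_sum_eq_one_of_mem_RD hα⟩
  rintro (rfl | rfl | rfl) <;> norm_num [Complex.div_re]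
  exacts [⟨2, 0, by simp⟩, ⟨3, 0, by simp⟩, ⟨4, 0, by simp⟩]

theorem stmt_5 (D : ℕ) (hD : 5 ≤ D) (hsf : Squarefree D)
    (hD7 : D ≠ 7) (hD11 : D ≠ 11) (hD15 : D ≠ 15) :
    ({z : ℂ | z ∈ RD D ∧ z ≠ 0 ∧ z ≠ 1 ∧ (1 / z).re ≥ 1 / 4} = {2, 3, 4}) ∧
    ∀ μ₁ μ₂ μ₃ : ℂ, μ₁ ∈ RD D → μ₂ ∈ RD D → μ₃ ∈ RD D →
      μ₁ ≠ 0 → μ₁ ≠ 1 → μ₂ ≠ 0 → μ₂ ≠ 1 → μ₃ ≠ 0 → μ₃ ≠ 1 →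
      1 / μ₁ + 1 / μ₂ + 1 / μ₃ = 1 →
      ({μ₁, μ₂, μ₃} : Multiset ℂ) = {2, 3, 6} ∨
      ({μ₁, μ₂, μ₃} : Multiset ℂ) = {2, 4, 4} ∨
      ({μ₁, μ₂, μ₃} : Multiset ℂ) = {3, 3, 3} :=
  stmt_5_general D hD hD7 hD11 hD15
end

section
/- Let D be a squarefree integer with D ≥ 5, D ≠ 7, and let R_D be the ring of integers of Q(i√D). If a ∈ R_D and there exists b ∈ R_D with a² − b² = 8, then a ∈ {−3, 3}. -/
lemma one_le_sq (p : ℤ) (h : p ≠ 0) : 1 ≤ p ^ 2 := by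
  rcases lt_or_gt_of_ne h with h | h <;> nlinarith

lemma sqval (p k : ℤ) (h : p ^ 2 = k ^ 2) : p = k ∨ p = -k := by
  have h0 : (p - k) * (p + k) = 0 := by linear_combination h
  rcases mul_eq_zero.mp h0 with h1 | h1
  · exact Or.inl (by omega)
  · exact Or.inr (by omega)

lemma sq_set (p : ℤ) (h : p ^ 2 ≤ 110) :
    p ^ 2 = 0 ∨ p ^ 2 = 1 ∨ p ^ 2 = 4 ∨ p ^ 2 = 9 ∨ p ^ 2 = 16 ∨ p ^ 2 = 25 ∨
    p ^ 2 = 36 ∨ p ^ 2 = 49 ∨ p ^ 2 = 64 ∨ p ^ 2 = 81 ∨ p ^ 2 = 100 := by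
  have h1 : -10 ≤ p := by nlinarith
  have h2 : p ≤ 10 := by nlinarith
  interval_cases p <;> norm_num

lemma sq8 (x u : ℤ) (h : x ^ 2 - u ^ 2 = 8) : x = 3 ∨ x = -3 := by
  obtain ⟨d, hd⟩ : ∃ d, d = x - u := ⟨_, rfl⟩
  have hprod : d * (x + u) = 8 := by rw [hd]; linear_combination h
  have hdvd : d ∣ 8 := ⟨x + u, hprod.symm⟩
  have h1 : d ≤ 8 := Int.le_of_dvd (by norm_num) hdvd
  have h2 : -8 ≤ d := by
    have := Int.le_of_dvd (b := 8) (by norm_num) ((neg_dvd).mpr hdvd)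
    omega
  interval_cases d <;> omega

lemma dio1 (D x y u v : ℤ) (hD : 5 ≤ D) (h56 : D ≤ 8 → D = 5 ∨ D = 6)
    (h1 : x * y = u * v) (h2 : x ^ 2 - D * y ^ 2 - u ^ 2 + D * v ^ 2 = 8) :
    y = 0 ∧ v = 0 ∧ (x = 3 ∨ x = -3) := by
  have key : ((x - u) ^ 2 + D * (y - v) ^ 2) * ((x + u) ^ 2 + D * (y + v) ^ 2) = 64 := by
    linear_combination (x ^ 2 - D * y ^ 2 - u ^ 2 + D * v ^ 2 + 8) * h2 +
      4 * D * (x * y - u * v) * h1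
  rcases eq_or_ne (y - v) 0 with hq | hq
  · -- y = v
    have hyv : y = v := by omega
    subst hyv
    rcases eq_or_ne y 0 with hy0 | hy0
    · subst hy0
      refine ⟨rfl, rfl, sq8 x u (by linarith)⟩
    · exfalso
      have hxu : x = u := by
        have : (x - u) * y = 0 := by linear_combination h1
        rcases mul_eq_zero.mp this with h | h
        · omega
        · exact absurd h hy0
      subst hxu
      omega
  · exfalso
    rcases eq_or_ne (y + v) 0 with hs | hs
    · -- v = -y, y ≠ 0
      have hy0 : y ≠ 0 := by omega
      have hxu : x + u = 0 := by
        have : (x + u) * y = 0 := by linear_combination h1 + u * hs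
        rcases mul_eq_zero.mp this with h | h
        · exact h
        · exact absurd h hy0
      have : (0 : ℤ) = 8 := by
        linear_combination h2 - (x - u) * hxu - D * (v - y) * hs
      omega
    · -- both nonzero
      have hq1 : 1 ≤ (y - v) ^ 2 := one_le_sq _ hq
      have hs1 : 1 ≤ (y + v) ^ 2 := one_le_sq _ hs
      obtain ⟨A, hAdef⟩ : ∃ A, A = (x - u) ^ 2 + D * (y - v) ^ 2 := ⟨_, rfl⟩
      obtain ⟨B, hBdef⟩ : ∃ B, B = (x + u) ^ 2 + D * (y + v) ^ 2 := ⟨_, rfl⟩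
      rw [← hAdef, ← hBdef] at key
      have hA5 : 5 ≤ A := by nlinarith [sq_nonneg (x - u)]
      have hB5 : 5 ≤ B := by nlinarith [sq_nonneg (x + u)]
      have hA12 : A ≤ 12 := by nlinarith
      have hdvd : A ∣ 64 := ⟨B, key.symm⟩
      have hA8 : A = 8 := by interval_cases A <;> omega
      have hB8 : B = 8 := by rw [hA8] at key; omega
      -- D * (y-v)^2 ≤ 8, D ≥ 5, so (y-v)^2 = 1
      have hq2 : (y - v) ^ 2 = 1 := by nlinarith [sq_nonneg (x - u)]
      have hD8 : D ≤ 8 := by nlinarith [sq_nonneg (x - u)]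
      have hP : (x - u) ^ 2 = 8 - D := by
        rw [hAdef] at hA8; linear_combination hA8 - D * hq2
      rcases h56 hD8 with h | h <;> rw [h] at hP <;>
        rcases sq_set (x - u) (by omega) with h' | h' | h' | h' | h' | h' | h' | h' | h' | h' | h' <;>
        omega

set_option maxHeartbeats 1600000 in
lemma dio2 (D X Y U V : ℤ) (hD : 11 ≤ D) (hm : D % 4 = 3)
    (hXp : (X - Y) % 2 = 0) (hUp : (U - V) % 2 = 0)
    (h1 : X * Y = U * V) (h2 : X ^ 2 - D * Y ^ 2 - U ^ 2 + D * V ^ 2 = 32) :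
    Y = 0 ∧ (X = 6 ∨ X = -6) := by
  have key : ((X - U) ^ 2 + D * (Y - V) ^ 2) * ((X + U) ^ 2 + D * (Y + V) ^ 2) = 1024 := by
    linear_combination (X ^ 2 - D * Y ^ 2 - U ^ 2 + D * V ^ 2 + 32) * h2 +
      4 * D * (X * Y - U * V) * h1
  rcases eq_or_ne (Y - V) 0 with hq | hq
  · have hyv : Y = V := by omega
    subst hyv
    rcases eq_or_ne Y 0 with hy0 | hy0
    · subst hy0
      refine ⟨rfl, ?_⟩
      obtain ⟨x, hx⟩ : ∃ x, X = 2 * x := ⟨X / 2, by omega⟩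
      obtain ⟨u, hu⟩ : ∃ u, U = 2 * u := ⟨U / 2, by omega⟩
      subst hx hu
      have h8 : x ^ 2 - u ^ 2 = 8 := by
        have h4 : 4 * (x ^ 2 - u ^ 2) = 32 := by linear_combination h2
        linarith
      rcases sq8 x u h8 with h | h <;> omega
    · exfalso
      have hxu : X - U = 0 := by
        have : (X - U) * Y = 0 := by linear_combination h1
        rcases mul_eq_zero.mp this with h | h
        · exact h
        · exact absurd h hy0
      have : (0 : ℤ) = 32 := by linear_combination h2 - (X + U) * hxu
      omega
  · exfalso
    rcases eq_or_ne (Y + V) 0 with hs | hs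
    · have hy0 : Y ≠ 0 := by omega
      have hxu : X + U = 0 := by
        have : (X + U) * Y = 0 := by linear_combination h1 + U * hs
        rcases mul_eq_zero.mp this with h | h
        · exact h
        · exact absurd h hy0
      have : (0 : ℤ) = 32 := by linear_combination h2 - (X - U) * hxu - D * (V - Y) * hs
      omega
    · -- main case: both components nonzero
      obtain ⟨P, hP⟩ : ∃ P, P = X - U := ⟨_, rfl⟩
      obtain ⟨Q, hQ⟩ : ∃ Q, Q = Y - V := ⟨_, rfl⟩
      obtain ⟨R, hR⟩ : ∃ R, R = X + U := ⟨_, rfl⟩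
      obtain ⟨S, hS⟩ : ∃ S, S = Y + V := ⟨_, rfl⟩
      rw [← hP, ← hQ, ← hR, ← hS] at key
      have hq1 : 1 ≤ Q ^ 2 := by rw [hQ]; exact one_le_sq _ hq
      have hs1 : 1 ≤ S ^ 2 := by rw [hS]; exact one_le_sq _ hs
      have hPS : P * S + Q * R = 0 := by
        rw [hP, hQ, hR, hS]; linear_combination 2 * h1
      have hPR : P * R - D * (Q * S) = 32 := by
        rw [hP, hQ, hR, hS]; linear_combination h2
      have hPRX : P + R = 2 * X := by rw [hP, hR]; ring
      have hQSY : Q + S = 2 * Y := by rw [hQ, hS]; ring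
      have hsqrel : P ^ 2 * S ^ 2 = Q ^ 2 * R ^ 2 := by
        linear_combination (P * S - Q * R) * hPS
      obtain ⟨A, hA⟩ : ∃ A, A = P ^ 2 + D * Q ^ 2 := ⟨_, rfl⟩
      obtain ⟨B, hB⟩ : ∃ B, B = R ^ 2 + D * S ^ 2 := ⟨_, rfl⟩
      rw [← hA, ← hB] at key
      have hA11 : 11 ≤ A := by
        rw [hA]
        nlinarith [sq_nonneg P, mul_nonneg (by linarith : (0:ℤ) ≤ D - 11) (sq_nonneg Q)]
      have hB11 : 11 ≤ B := by
        rw [hB]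
        nlinarith [sq_nonneg R, mul_nonneg (by linarith : (0:ℤ) ≤ D - 11) (sq_nonneg S)]
      have hA93 : A ≤ 93 := by nlinarith
      have hdvd : A ∣ 1024 := ⟨B, key.symm⟩
      have hAval : A = 16 ∨ A = 32 ∨ A = 64 := by interval_cases A <;> omega
      rcases hAval with hAv | hAv | hAv
      · -- A = 16, B = 64
        have hBv : B = 64 := by rw [hAv] at key; omega
        have hA16 : P ^ 2 + D * Q ^ 2 = 16 := by rw [← hA, hAv]
        have hB64 : R ^ 2 + D * S ^ 2 = 64 := by rw [← hB, hBv]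
        have hQ2 : Q ^ 2 = 1 := by
          nlinarith [sq_nonneg P, mul_nonneg (by linarith : (0:ℤ) ≤ D - 11) (sq_nonneg Q)]
        have hP2 : P ^ 2 = 16 - D := by linear_combination hA16 - D * hQ2
        have hD16 : D ≤ 16 := by nlinarith [sq_nonneg P]
        have hD15 : D = 11 ∨ D = 15 := by omega
        rcases hD15 with hDv | hDv <;> subst hDv
        · -- P^2 = 5 impossible
          rcases sq_set P (by linarith) with h | h | h | h | h | h | h | h | h | h | h <;> linarith
        · have hP2' : P ^ 2 = 1 := by linarith
          have hSR : S ^ 2 = R ^ 2 := by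
            linear_combination hsqrel - S ^ 2 * hP2' + R ^ 2 * hQ2
          have hS2 : S ^ 2 = 4 := by linarith
          have hR2 : R ^ 2 = 4 := by linarith
          rcases sqval P 1 hP2' with hPv | hPv <;>
            rcases sqval R 2 hR2 with hRv | hRv <;> subst hPv hRv <;> omega
      · -- A = 32, B = 32
        have hBv : B = 32 := by rw [hAv] at key; omega
        have hA32 : P ^ 2 + D * Q ^ 2 = 32 := by rw [← hA, hAv]
        have hB32 : R ^ 2 + D * S ^ 2 = 32 := by rw [← hB, hBv]
        have hQ2 : Q ^ 2 = 1 := by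
          have : Q ^ 2 ≤ 2 := by
            nlinarith [sq_nonneg P, mul_nonneg (by linarith : (0:ℤ) ≤ D - 11) (sq_nonneg Q)]
          rcases sq_set Q (by linarith) with h | h | h | h | h | h | h | h | h | h | h <;> linarith
        have hS2 : S ^ 2 = 1 := by
          have : S ^ 2 ≤ 2 := by
            nlinarith [sq_nonneg R, mul_nonneg (by linarith : (0:ℤ) ≤ D - 11) (sq_nonneg S)]
          rcases sq_set S (by linarith) with h | h | h | h | h | h | h | h | h | h | h <;> linarith
        have hP2 : P ^ 2 = 32 - D := by linear_combination hA32 - D * hQ2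
        have hR2 : R ^ 2 = 32 - D := by linear_combination hB32 - D * hS2
        have hQS2 : (Q * S) ^ 2 = 1 ^ 2 := by
          linear_combination S ^ 2 * hQ2 + hS2
        rcases sqval (Q * S) 1 hQS2 with hqs | hqs
        · -- Q*S = 1 : impossible
          have hPRv : P * R = 32 + D := by linear_combination hPR + D * hqs
          have e : (32 + D) ^ 2 = (32 - D) ^ 2 := by
            linear_combination (-(P * R + 32 + D)) * hPRv + R ^ 2 * hP2 + (32 - D) * hR2
          have : (128 : ℤ) * D = 0 := by linear_combination e
          omega
        · -- Q*S = -1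
          have hPRv : P * R = 32 - D := by linear_combination hPR + D * hqs
          have hPReq : (P - R) ^ 2 = 0 := by linear_combination hP2 + hR2 - 2 * hPRv
          have hPReq2 : P = R := by
            have := pow_eq_zero_iff (n := 2) (by norm_num) |>.mp hPReq
            omega
          rcases Int.even_or_odd P with ⟨t, ht⟩ | ⟨t, ht⟩
          · -- P even : D ≡ 0 mod 4, contradiction
            have h4 : 4 * t ^ 2 = 32 - D := by rw [ht] at hP2; linear_combination hP2
            obtain ⟨w, hw⟩ : ∃ w, w = t ^ 2 := ⟨_, rfl⟩
            rw [← hw] at h4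
            omega
          · -- P odd : X odd but Y = 0, contradiction with parity
            rcases sqval Q 1 hQ2 with hQv | hQv <;>
              rcases sqval S 1 hS2 with hSv | hSv <;> subst hQv hSv <;> omega
      · -- A = 64, B = 16
        have hBv : B = 16 := by rw [hAv] at key; omega
        have hA64 : P ^ 2 + D * Q ^ 2 = 64 := by rw [← hA, hAv]
        have hB16 : R ^ 2 + D * S ^ 2 = 16 := by rw [← hB, hBv]
        have hS2 : S ^ 2 = 1 := by
          nlinarith [sq_nonneg R, mul_nonneg (by linarith : (0:ℤ) ≤ D - 11) (sq_nonneg S)]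
        have hR2 : R ^ 2 = 16 - D := by linear_combination hB16 - D * hS2
        have hD16 : D ≤ 16 := by nlinarith [sq_nonneg R]
        have hD15 : D = 11 ∨ D = 15 := by omega
        rcases hD15 with hDv | hDv <;> subst hDv
        · rcases sq_set R (by linarith) with h | h | h | h | h | h | h | h | h | h | h <;> linarith
        · have hR2' : R ^ 2 = 1 := by linarith
          have hPQ : P ^ 2 = Q ^ 2 := by
            linear_combination hsqrel - P ^ 2 * hS2 + Q ^ 2 * hR2'
          have hQ2 : Q ^ 2 = 4 := by linarith
          rcases sqval Q 2 hQ2 with hQv | hQv <;>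
            rcases sqval S 1 hS2 with hSv | hSv <;> subst hQv hSv <;> omega

lemma indep (s : ℝ) (hs : s ≠ 0) (m n : ℤ)
    (h : (m : ℂ) + (n : ℂ) * (Complex.I * (s : ℂ)) = 0) : m = 0 ∧ n = 0 := by
  have him := congrArg Complex.im h
  have hre := congrArg Complex.re h
  simp [Complex.add_im, Complex.mul_im, Complex.add_re, Complex.mul_re] at him hre
  constructor
  · exact_mod_cast hre
  · rcases him with h | h
    · exact_mod_cast h
    · exact absurd h hs

open Polynomial

theorem stmt_14 (D : ℕ) (hD : 5 ≤ D) (hsf : Squarefree D) (hD7 : D ≠ 7)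
    (a : ℂ) (ha : a ∈ RD D) (hb : ∃ b ∈ RD D, a ^ 2 - b ^ 2 = 8) :
    a = -3 ∨ a = 3 := by
  obtain ⟨x, y, hxy⟩ := ha
  obtain ⟨b, ⟨u, v, huv⟩, heq⟩ := hb
  subst hxy huv
  have hD0 : (0 : ℝ) < (D : ℝ) := by
    have : 0 < D := by omega
    exact_mod_cast this
  have hs2 : (Complex.I * ((Real.sqrt D : ℝ) : ℂ)) ^ 2 = -((D : ℕ) : ℂ) := by
    rw [mul_pow, Complex.I_sq, ← Complex.ofReal_pow, Real.sq_sqrt hD0.le]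
    push_cast
    ring
  by_cases h4 : D % 4 = 3
  · -- half-integer generator
    have halpha : alphaD D = (1 + Complex.I * Real.sqrt D) / 2 := by
      rw [alphaD, if_pos h4]
    rw [halpha] at heq
    have hkey : (((2 * x + y) ^ 2 - (D : ℤ) * y ^ 2 - (2 * u + v) ^ 2 + (D : ℤ) * v ^ 2
          - 32 : ℤ) : ℂ)
        + ((2 * ((2 * x + y) * y - (2 * u + v) * v) : ℤ) : ℂ)
          * (Complex.I * ((Real.sqrt D : ℝ) : ℂ)) = 0 := by
      push_cast
      linear_combination 4 * heq + ((v : ℂ) ^ 2 - (y : ℂ) ^ 2) * hs2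
    obtain ⟨e1, e2⟩ := indep _ (ne_of_gt (Real.sqrt_pos.mpr hD0)) _ _ hkey
    have e1' : (2 * x + y) ^ 2 - (D : ℤ) * y ^ 2 - (2 * u + v) ^ 2 + (D : ℤ) * v ^ 2 = 32 := by
      linarith [e1]
    have e2' : (2 * x + y) * y = (2 * u + v) * v := by linarith [e2]
    have hD11 : (11 : ℤ) ≤ (D : ℤ) := by
      have : 11 ≤ D := by omega
      exact_mod_cast this
    have hm : ((D : ℤ)) % 4 = 3 := by omega
    obtain ⟨hY0, hX6⟩ := dio2 (D : ℤ) (2 * x + y) y (2 * u + v) v hD11 hm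
      (by omega) (by omega) e2' e1'
    have hx3 : x = 3 ∨ x = -3 := by omega
    subst hY0
    rcases hx3 with h | h <;> subst h
    · right; push_cast; ring
    · left; push_cast; ring
  · -- generator i√D
    have halpha : alphaD D = Complex.I * Real.sqrt D := by
      rw [alphaD, if_neg h4]
    rw [halpha] at heq
    have hkey : ((x ^ 2 - (D : ℤ) * y ^ 2 - u ^ 2 + (D : ℤ) * v ^ 2 - 8 : ℤ) : ℂ)
        + ((2 * (x * y - u * v) : ℤ) : ℂ) * (Complex.I * ((Real.sqrt D : ℝ) : ℂ)) = 0 := by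
      push_cast
      linear_combination heq + ((v : ℂ) ^ 2 - (y : ℂ) ^ 2) * hs2
    obtain ⟨e1, e2⟩ := indep _ (ne_of_gt (Real.sqrt_pos.mpr hD0)) _ _ hkey
    have e1' : x ^ 2 - (D : ℤ) * y ^ 2 - u ^ 2 + (D : ℤ) * v ^ 2 = 8 := by linarith [e1]
    have e2' : x * y = u * v := by linarith [e2]
    have h56 : (D : ℤ) ≤ 8 → (D : ℤ) = 5 ∨ (D : ℤ) = 6 := by
      intro h
      have hD8 : D ≤ 8 := by exact_mod_cast h
      have hne8 : D ≠ 8 := by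
        rintro rfl
        exact (by decide : ¬ Squarefree 8) hsf
      have : D = 5 ∨ D = 6 := by omega
      rcases this with h | h <;> [left; right] <;> exact_mod_cast h
    obtain ⟨hY0, hV0, hx3⟩ := dio1 (D : ℤ) x y u v (by exact_mod_cast hD) h56 e2' e1'
    subst hY0
    rcases hx3 with h | h <;> subst h
    · right; push_cast; ring
    · left; push_cast; ring
end

section
/- Let D be a squarefree positive integer with D ∉ {2, 3}, and let R_D be the ring of integers of Q(i√D). Then the set of elements a ∈ R_D \ {1} of the form a = (c² − 2c + 9)/(4c) for some c ∈ R_D whose norm divides 81 is exactly {−3, −2, 2}. -/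
/-!
Write `2c = X + Y i√D` and `2a = U + V i√D` with `X ≡ Y` and `U ≡ V (mod 2)`. Multiplying
`4ac = c² - 2c + 9` by `c̄` gives `n (4a + 2) = n c + 9 c̄` with `n = N(c)`, i.e. three integer
equations. Replacing `c` by `9 / c = 4a + 2 - c`, of norm `81 / n`, reduces to `n ∣ 9`; then
`|X|, |Y| ≤ 6`, and a finite search shows `V = 0` and `2a ∈ {4, -6, -4, 2}` as soon as
`D ∉ {2, 3, 8}`.
-/

open Polynomial

open Complex ComplexConjugate

/-- With `2c = X + Y i√D` and `2a = U + V i√D`, these say `N(c) = n` and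
`n (4a + 2) = n c + 9 c̄`. -/
def CoordEqns (D n X Y U V : ℤ) : Prop :=
  X ^ 2 + D * Y ^ 2 = 4 * n ∧ n * (4 * U + 4) = (n + 9) * X ∧ 4 * n * V = (n - 9) * Y

namespace CoordEqns

variable {D n X Y U V : ℤ}

/-- Passing from `c` to `9 / c = 4a + 2 - c`, which leaves `a` unchanged. -/
theorem swap (h : CoordEqns D n X Y U V) {m : ℤ} (hnm : n * m = 81) :
    CoordEqns D m (4 * U + 4 - X) (4 * V - Y) U V := by
  obtain ⟨hN, hre, him⟩ := h
  have hn : n ≠ 0 := by rintro rfl; simp at hnm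
  have hX : n * (4 * U + 4 - X) = 9 * X := by linear_combination hre
  have hY : n * (4 * V - Y) = -9 * Y := by linear_combination him
  refine ⟨mul_left_cancel₀ (pow_ne_zero 2 hn) ?_, mul_left_cancel₀ hn ?_, mul_left_cancel₀ hn ?_⟩
  · linear_combination (n * (4 * U + 4 - X) + 9 * X) * hX
      + D * (n * (4 * V - Y) - 9 * Y) * hY + 81 * hN - 4 * n * hnm
  · linear_combination X * hnm - 9 * hX
  · linear_combination Y * hnm + 9 * hY

theorem eq_zero_and_mem_of_dvd_nine (h : CoordEqns D n X Y U V) (hD : 1 ≤ D) (hD2 : D ≠ 2)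
    (hD3 : D ≠ 3) (hD8 : D ≠ 8) (hn : 0 < n) (hn9 : n ∣ 9) (hXY : X ≡ Y [ZMOD 2])
    (hUV : U ≡ V [ZMOD 2]) :
    V = 0 ∧ (U = 4 ∨ U = -6 ∨ U = -4 ∨ U = 2) := by
  obtain ⟨hN, hre, him⟩ := h
  have hX : X ^ 2 ≤ 4 * n := by nlinarith [sq_nonneg Y]
  have hY : Y ^ 2 ≤ 4 * n := by nlinarith [sq_nonneg X]
  rw [Int.ModEq] at hXY hUV
  have := Int.le_of_dvd (by norm_num) hn9
  interval_cases n <;> norm_num at hn9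
  · obtain ⟨_, _⟩ : -2 ≤ X ∧ X ≤ 2 := abs_le_of_sq_le_sq' (by linarith) (by norm_num)
    obtain ⟨_, _⟩ : -2 ≤ Y ∧ Y ≤ 2 := abs_le_of_sq_le_sq' (by linarith) (by norm_num)
    interval_cases X <;> interval_cases Y <;> omega
  · obtain ⟨_, _⟩ : -4 ≤ X ∧ X ≤ 4 := abs_le_of_sq_le_sq' (by linarith) (by norm_num)
    obtain ⟨_, _⟩ : -4 ≤ Y ∧ Y ≤ 4 := abs_le_of_sq_le_sq' (by linarith) (by norm_num)
    interval_cases X <;> interval_cases Y <;> omega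
  · obtain ⟨_, _⟩ : -6 ≤ X ∧ X ≤ 6 := abs_le_of_sq_le_sq' (by linarith) (by norm_num)
    obtain ⟨_, _⟩ : -6 ≤ Y ∧ Y ≤ 6 := abs_le_of_sq_le_sq' (by linarith) (by norm_num)
    interval_cases X <;> interval_cases Y <;> omega

theorem eq_zero_and_mem_of_dvd_eighty_one (h : CoordEqns D n X Y U V) (hD : 1 ≤ D) (hD2 : D ≠ 2)
    (hD3 : D ≠ 3) (hD8 : D ≠ 8) (hn : 0 < n) (hn81 : n ∣ 81) (hXY : X ≡ Y [ZMOD 2])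
    (hUV : U ≡ V [ZMOD 2]) :
    V = 0 ∧ (U = 4 ∨ U = -6 ∨ U = -4 ∨ U = 2) := by
  have hXY' : 4 * U + 4 - X ≡ 4 * V - Y [ZMOD 2] := by rw [Int.ModEq] at *; omega
  have hn81' : n ∣ 9 ∨ n = 27 ∨ n = 81 := by
    have := Int.le_of_dvd (by norm_num) hn81
    interval_cases n <;> omega
  rcases hn81' with hn9 | rfl | rfl
  · exact h.eq_zero_and_mem_of_dvd_nine hD hD2 hD3 hD8 hn hn9 hXY hUV
  · exact (h.swap (m := 3) rfl).eq_zero_and_mem_of_dvd_nine hD hD2 hD3 hD8 (by norm_num)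
      (by norm_num) hXY' hUV
  · exact (h.swap (m := 1) rfl).eq_zero_and_mem_of_dvd_nine hD hD2 hD3 hD8 (by norm_num)
      (by norm_num) hXY' hUV

end CoordEqns

theorem intCast_mem_RD (D : ℕ) (m : ℤ) : (m : ℂ) ∈ RD D :=
  ⟨m, 0, by simp⟩

theorem exists_coords_of_mem_RD {D : ℕ} {z : ℂ} (hz : z ∈ RD D) :
    ∃ X Y : ℤ, 2 * z = X + Y * (I * √D) ∧ X ≡ Y [ZMOD 2] := by
  obtain ⟨x, y, rfl⟩ := hz
  unfold alphaD
  split_ifs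
  · exact ⟨2 * x + y, y, by push_cast; ring, by rw [Int.ModEq]; omega⟩
  · exact ⟨2 * x, 2 * y, by push_cast; ring, by rw [Int.ModEq]; omega⟩

theorem norm_sq_mul_four_mul_add_two {a c : ℂ} (hc : c ≠ 0)
    (ha : a = (c ^ 2 - 2 * c + 9) / (4 * c)) :
    (‖c‖ ^ 2 : ℂ) * (4 * a + 2) = ‖c‖ ^ 2 * c + 9 * conj c := by
  have h4 : 4 * a * c = c ^ 2 - 2 * c + 9 := by rw [ha]; field_simp
  rw [← mul_conj']
  linear_combination conj c * h4

theorem coordEqns_of_eq_div {D : ℕ} (hD : 0 < D) {a c : ℂ} {n X Y U V : ℤ}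
    (hc : 2 * c = X + Y * (I * √D)) (ha : 2 * a = U + V * (I * √D)) (hn : ‖c‖ ^ 2 = n)
    (hc0 : c ≠ 0) (hac : a = (c ^ 2 - 2 * c + 9) / (4 * c)) : CoordEqns D n X Y U V := by
  have hs : √(D : ℝ) ^ 2 = D := Real.sq_sqrt (by positivity)
  have hs0 : √(D : ℝ) ≠ 0 := by positivity
  have hconj := norm_sq_mul_four_mul_add_two hc0 hac
  have hn' : ((‖c‖ : ℂ)) ^ 2 = n := by exact_mod_cast hn
  have hconj2 : (n : ℂ) * (4 * (2 * a) + 4) = n * (2 * c) + 9 * conj (2 * c) := by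
    rw [map_mul, map_ofNat, ← hn']; linear_combination 2 * hconj
  have hnorm : ‖2 * c‖ ^ 2 = 4 * n := by rw [norm_mul, mul_pow, hn]; norm_num
  rw [hc, ha] at hconj2
  rw [hc, Complex.sq_norm, Complex.normSq_apply] at hnorm
  have hre := congrArg Complex.re hconj2
  have him := congrArg Complex.im hconj2
  simp only [mul_re, intCast_re, add_re, re_ofNat, I_re, ofReal_re, zero_mul, I_im, ofReal_im,
    mul_zero, sub_self, intCast_im, mul_im, one_mul, zero_add, add_zero, im_ofNat, add_im, sub_zero,
    map_add, map_intCast, map_mul, conj_I, conj_ofReal, neg_mul, mul_neg, neg_re, neg_zero,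
    neg_im] at hre him hnorm
  refine ⟨?_, ?_, ?_⟩
  · exact_mod_cast (by linear_combination hnorm - (Y : ℝ) ^ 2 * hs :
      (X : ℝ) ^ 2 + D * Y ^ 2 = 4 * n)
  · exact_mod_cast (by linear_combination hre : (n : ℝ) * (4 * U + 4) = (n + 9) * X)
  · exact_mod_cast mul_right_cancel₀ hs0 (by linear_combination him :
      (4 * n * V : ℝ) * √D = ((n - 9) * Y) * √D)

theorem stmt_17 (D : ℕ) (hD : 0 < D) (hsf : Squarefree D)
    (hD2 : D ≠ 2) (hD3 : D ≠ 3) :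
    {a : ℂ | a ∈ RD D ∧ a ≠ 1 ∧
        ∃ c ∈ RD D, (∃ n : ℤ, (‖c‖ : ℝ) ^ 2 = (n : ℝ) ∧ n ∣ 81) ∧
          a = (c ^ 2 - 2 * c + 9) / (4 * c)} = {-3, -2, 2} := by
  have hD8 : D ≠ 8 := by rintro rfl; exact absurd hsf (by decide)
  ext a
  simp only [Set.mem_ofPred_eq, Set.mem_insert_iff, Set.mem_singleton_iff]
  constructor
  · rintro ⟨haR, ha1, c, hcR, ⟨n, hn, hn81⟩, hac⟩
    have hn0 : n ≠ 0 := by rintro rfl; norm_num at hn81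
    have hnpos : 0 < n := by
      have : (0 : ℝ) ≤ n := hn ▸ sq_nonneg ‖c‖
      exact lt_of_le_of_ne (by exact_mod_cast this) hn0.symm
    have hc0 : c ≠ 0 := by rintro rfl; exact hn0 (by exact_mod_cast (by simpa using hn.symm))
    obtain ⟨X, Y, hc, hXY⟩ := exists_coords_of_mem_RD hcR
    obtain ⟨U, V, ha, hUV⟩ := exists_coords_of_mem_RD haR
    obtain ⟨rfl, hU⟩ :=
      (coordEqns_of_eq_div hD hc ha hn hc0 hac).eq_zero_and_mem_of_dvd_eighty_one
        (by omega) (by omega) (by omega) (by omega) hnpos hn81 hXY hUV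
    have ha2 : a = U / 2 := by rw [eq_div_iff two_ne_zero, mul_comm, ha]; simp
    subst ha2
    rcases hU with rfl | rfl | rfl | rfl <;> norm_num at ha1 <;> norm_num
  · rintro (rfl | rfl | rfl)
    · exact ⟨by exact_mod_cast intCast_mem_RD D (-3), by norm_num, -1,
        by exact_mod_cast intCast_mem_RD D (-1), ⟨1, by norm_num, one_dvd _⟩, by norm_num⟩
    · exact ⟨by exact_mod_cast intCast_mem_RD D (-2), by norm_num, -3,
        by exact_mod_cast intCast_mem_RD D (-3), ⟨9, by norm_num, by norm_num⟩, by norm_num⟩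
    · exact ⟨by exact_mod_cast intCast_mem_RD D 2, by norm_num, 1,
        by exact_mod_cast intCast_mem_RD D 1, ⟨1, by norm_num, one_dvd _⟩, by norm_num⟩
end
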